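/- Suppose λ₁ ≤ ρ* ≤ λ₂ and let cΘ ∈ [0,1]. Let x and v be nonzero vectors with vᵀB x = 0, f(x) ≤ ρ*, and |vᵀA x| ≤ cΘ·‖v‖_A·‖x‖_A. Then 1/f(v) ≤ 1/λ₂ + 2(1/λ₁ − 1/λ₂)·cΘ² + 2(1/λ₁ − 1/ρ*). -/

import Mathlib

/-!
Write `cos²(w, y)` for the squared cosine of the angle between `w` and `y` in the `A`-inner
product, and `λ₁ ≤ λ₂` for the two smallest eigenvalues. Expanding `w` in the `M`-orthonormal
eigenbasis gives `1 / f(w) ≤ 1/λ₂ + (1/λ₁ - 1/λ₂) cos²(w, u₁)` for every `w ≠ 0`. For `x` this,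
together with `f(x) ≤ ρ*`, yields `(1/λ₁ - 1/λ₂) (1 - cos²(x, u₁)) ≤ 1/λ₁ - 1/ρ*`. For `v` it
reduces the claim to bounding `cos²(v, u₁)`, which the angle inequality
`cos²(v, u₁) ≤ 2 cos²(v, x) + 2 (1 - cos²(x, u₁))` does, with `cos²(v, x) ≤ cΘ²` by assumption.
-/

open Matrix Finset

namespace Matrix

variable {ι : Type*} [Fintype ι]

theorem IsHermitian.dotProduct_mulVec_comm {S : Matrix ι ι ℝ} (hS : S.IsHermitian)
    (x y : ι → ℝ) : x ⬝ᵥ S *ᵥ y = y ⬝ᵥ S *ᵥ x := by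
  rw [dotProduct_mulVec, ← mulVec_transpose, ← conjTranspose_eq_transpose_of_trivial, hS.eq,
    dotProduct_comm]

theorem PosSemidef.dotProduct_mulVec_sq_le {S : Matrix ι ι ℝ} (hS : S.PosSemidef)
    (x y : ι → ℝ) : (x ⬝ᵥ S *ᵥ y) ^ 2 ≤ (x ⬝ᵥ S *ᵥ x) * (y ⬝ᵥ S *ᵥ y) := by
  classical
  have hsymm : LinearMap.IsSymm (toBilin' S) := ⟨fun a b => by
    simpa [toBilin'_apply'] using hS.isHermitian.dotProduct_mulVec_comm a b⟩
  simpa only [toBilin'_apply'] using (toBilin' S).apply_sq_le_of_symm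
    (fun z => by simpa [toBilin'_apply'] using hS.dotProduct_mulVec_nonneg z) hsymm x y


theorem sum_smul_dotProduct_mulVec (S : Matrix ι ι ℝ) (u : ι → ι → ℝ) (c : ι → ℝ) (w : ι → ℝ) :
    (∑ i, c i • u i) ⬝ᵥ S *ᵥ w = ∑ i, c i * (u i ⬝ᵥ S *ᵥ w) := by
  simp only [sum_dotProduct, smul_dotProduct, smul_eq_mul]

theorem dotProduct_mulVec_sum_smul (S : Matrix ι ι ℝ) (u : ι → ι → ℝ) (c : ι → ℝ) (w : ι → ℝ) :
    w ⬝ᵥ S *ᵥ (∑ i, c i • u i) = ∑ i, c i * (w ⬝ᵥ S *ᵥ u i) := by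
  simp only [mulVec_sum, mulVec_smul, dotProduct_sum, dotProduct_smul, smul_eq_mul]

noncomputable def cosSqAngle (S : Matrix ι ι ℝ) (x y : ι → ℝ) : ℝ :=
  (x ⬝ᵥ S *ᵥ y) ^ 2 / ((x ⬝ᵥ S *ᵥ x) * (y ⬝ᵥ S *ᵥ y))

theorem cosSqAngle_le_sq_of_abs_le {S : Matrix ι ι ℝ} (hS : S.PosSemidef) {x y : ι → ℝ} {c : ℝ}
    (h : |x ⬝ᵥ S *ᵥ y| ≤ c * √(x ⬝ᵥ S *ᵥ x) * √(y ⬝ᵥ S *ᵥ y)) : cosSqAngle S x y ≤ c ^ 2 := by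
  have hx : 0 ≤ x ⬝ᵥ S *ᵥ x := by simpa using hS.dotProduct_mulVec_nonneg x
  have hy : 0 ≤ y ⬝ᵥ S *ᵥ y := by simpa using hS.dotProduct_mulVec_nonneg y
  refine div_le_of_le_mul₀ (mul_nonneg hx hy) (sq_nonneg c) ?_
  calc (x ⬝ᵥ S *ᵥ y) ^ 2 = |x ⬝ᵥ S *ᵥ y| ^ 2 := (sq_abs _).symm
    _ ≤ (c * √(x ⬝ᵥ S *ᵥ x) * √(y ⬝ᵥ S *ᵥ y)) ^ 2 := pow_le_pow_left₀ (abs_nonneg _) h 2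
    _ = c ^ 2 * ((x ⬝ᵥ S *ᵥ x) * (y ⬝ᵥ S *ᵥ y)) := by
        rw [mul_pow, mul_pow, Real.sq_sqrt hx, Real.sq_sqrt hy, mul_assoc]

theorem PosSemidef.mul_sq_dotProduct_mulVec_le {S : Matrix ι ι ℝ} (hS : S.PosSemidef)
    {v x y : ι → ℝ} (hx : 0 < x ⬝ᵥ S *ᵥ x) :
    (x ⬝ᵥ S *ᵥ x) * (v ⬝ᵥ S *ᵥ y) ^ 2 ≤ 2 * (y ⬝ᵥ S *ᵥ y) * (v ⬝ᵥ S *ᵥ x) ^ 2 +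
      2 * (v ⬝ᵥ S *ᵥ v) * ((x ⬝ᵥ S *ᵥ x) * (y ⬝ᵥ S *ᵥ y) - (x ⬝ᵥ S *ᵥ y) ^ 2) := by
  -- `z` is the part of `(x ⬝ᵥ S *ᵥ x) • y` that is `S`-orthogonal to `x`.
  set z := (x ⬝ᵥ S *ᵥ x) • y - (x ⬝ᵥ S *ᵥ y) • x
  have hvz : v ⬝ᵥ S *ᵥ z = (x ⬝ᵥ S *ᵥ x) * (v ⬝ᵥ S *ᵥ y) - (x ⬝ᵥ S *ᵥ y) * (v ⬝ᵥ S *ᵥ x) := by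
    simp only [z, mulVec_sub, mulVec_smul, dotProduct_sub, dotProduct_smul, smul_eq_mul]
  have hzz : z ⬝ᵥ S *ᵥ z =
      (x ⬝ᵥ S *ᵥ x) * ((x ⬝ᵥ S *ᵥ x) * (y ⬝ᵥ S *ᵥ y) - (x ⬝ᵥ S *ᵥ y) ^ 2) := by
    simp only [z, mulVec_sub, mulVec_smul, dotProduct_sub, sub_dotProduct, dotProduct_smul,
      smul_dotProduct, smul_eq_mul, hS.isHermitian.dotProduct_mulVec_comm y x]
    ring
  have hcs_vz := hS.dotProduct_mulVec_sq_le v z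
  have hcs_xy := hS.dotProduct_mulVec_sq_le x y
  rw [hvz, hzz] at hcs_vz
  refine le_of_mul_le_mul_left ?_ hx
  -- Split `(x ⬝ᵥ S *ᵥ x) * (v ⬝ᵥ S *ᵥ y)` as `(x ⬝ᵥ S *ᵥ y) * (v ⬝ᵥ S *ᵥ x) + v ⬝ᵥ S *ᵥ z`,
  -- use `(b + c)² ≤ 2 b² + 2 c²` and bound both terms by Cauchy–Schwarz.
  nlinarith [mul_le_mul_of_nonneg_right hcs_xy (sq_nonneg (v ⬝ᵥ S *ᵥ x)),
    sq_nonneg ((x ⬝ᵥ S *ᵥ x) * (v ⬝ᵥ S *ᵥ y) - 2 * (x ⬝ᵥ S *ᵥ y) * (v ⬝ᵥ S *ᵥ x))]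

theorem cosSqAngle_le_two_mul_cosSqAngle_add {S : Matrix ι ι ℝ} (hS : S.PosDef) {v x y : ι → ℝ}
    (hv : v ≠ 0) (hx : x ≠ 0) (hy : y ≠ 0) :
    cosSqAngle S v y ≤ 2 * cosSqAngle S v x + 2 * (1 - cosSqAngle S x y) := by
  have hV : 0 < v ⬝ᵥ S *ᵥ v := by simpa using hS.dotProduct_mulVec_pos hv
  have hT : 0 < x ⬝ᵥ S *ᵥ x := by simpa using hS.dotProduct_mulVec_pos hx
  have hY : 0 < y ⬝ᵥ S *ᵥ y := by simpa using hS.dotProduct_mulVec_pos hy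
  have key := hS.posSemidef.mul_sq_dotProduct_mulVec_le (v := v) (y := y) hT
  unfold cosSqAngle
  field_simp
  linarith [key]

section Orthonormal

variable [DecidableEq ι] {M : Matrix ι ι ℝ} {u : ι → ι → ℝ}
  (horth : ∀ i j, u i ⬝ᵥ M *ᵥ u j = if i = j then 1 else 0)
include horth

theorem sum_smul_dotProduct_mulVec_of_orthonormal (c : ι → ℝ) (j : ι) :
    (∑ i, c i • u i) ⬝ᵥ M *ᵥ u j = c j := by
  simp [sum_smul_dotProduct_mulVec, horth]

theorem linearIndependent_of_orthonormal : LinearIndependent ℝ u :=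
  Fintype.linearIndependent_iff.mpr fun c hc j => by
    simpa [hc] using (sum_smul_dotProduct_mulVec_of_orthonormal horth c j).symm

theorem eq_sum_smul_of_orthonormal (w : ι → ℝ) : w = ∑ i, (w ⬝ᵥ M *ᵥ u i) • u i := by
  have hspan : Submodule.span ℝ (Set.range u) = ⊤ :=
    (linearIndependent_of_orthonormal horth).span_eq_top_of_card_eq_finrank'
      (Module.finrank_fintype_fun_eq_card ℝ).symm
  obtain ⟨c, rfl⟩ := (Submodule.mem_span_range_iff_exists_fun ℝ).mp (hspan ▸ Submodule.mem_top :
    w ∈ Submodule.span ℝ (Set.range u))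
  simp only [sum_smul_dotProduct_mulVec_of_orthonormal horth]

theorem dotProduct_mulVec_self_eq_sum_sq (w : ι → ℝ) :
    w ⬝ᵥ M *ᵥ w = ∑ i, (w ⬝ᵥ M *ᵥ u i) ^ 2 := by
  nth_rw 2 [eq_sum_smul_of_orthonormal horth w]
  simp only [dotProduct_mulVec_sum_smul, sq]

theorem dotProduct_mulVec_self_eq_sum_eigenvalue_mul_sq {A : Matrix ι ι ℝ} {lam : ι → ℝ}
    (heig : ∀ i, A *ᵥ u i = lam i • (M *ᵥ u i)) (w : ι → ℝ) :
    w ⬝ᵥ A *ᵥ w = ∑ i, lam i * (w ⬝ᵥ M *ᵥ u i) ^ 2 := by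
  nth_rw 2 [eq_sum_smul_of_orthonormal horth w]
  simp only [dotProduct_mulVec_sum_smul, heig, dotProduct_smul, smul_eq_mul]
  exact sum_congr rfl fun i _ => by ring

theorem mul_dotProduct_mulVec_le_of_eigenvalue_ge {A : Matrix ι ι ℝ} {lam : ι → ℝ}
    (heig : ∀ i, A *ᵥ u i = lam i • (M *ᵥ u i)) {i₀ : ι} {μ : ℝ}
    (hμ : ∀ i ≠ i₀, μ ≤ lam i) (w : ι → ℝ) :
    μ * (w ⬝ᵥ M *ᵥ w) ≤ w ⬝ᵥ A *ᵥ w + (μ - lam i₀) * (w ⬝ᵥ M *ᵥ u i₀) ^ 2 := by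
  set c := fun i => w ⬝ᵥ M *ᵥ u i
  have hterm : ∀ i,
      μ * c i ^ 2 ≤ lam i * c i ^ 2 + if i = i₀ then (μ - lam i₀) * c i₀ ^ 2 else 0 := by
    intro i
    by_cases hi : i = i₀
    · subst hi; simp only [if_true]; linarith
    · simp only [hi, if_false, add_zero]
      exact mul_le_mul_of_nonneg_right (hμ i hi) (sq_nonneg _)
  calc μ * (w ⬝ᵥ M *ᵥ w) = ∑ i, μ * c i ^ 2 := by
        rw [dotProduct_mulVec_self_eq_sum_sq horth, mul_sum]
    _ ≤ ∑ i, (lam i * c i ^ 2 + if i = i₀ then (μ - lam i₀) * c i₀ ^ 2 else 0) :=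
        sum_le_sum fun i _ => hterm i
    _ = _ := by
        rw [sum_add_distrib, sum_ite_eq', if_pos (mem_univ _),
          dotProduct_mulVec_self_eq_sum_eigenvalue_mul_sq horth heig]

theorem dotProduct_mulVec_div_le_of_eigenvalue_ge {A : Matrix ι ι ℝ} (hA : A.PosDef)
    {lam : ι → ℝ} (heig : ∀ i, A *ᵥ u i = lam i • (M *ᵥ u i)) {i₀ : ι} {μ : ℝ}
    (hlam : 0 < lam i₀) (hμ₀ : 0 < μ) (hμ : ∀ i ≠ i₀, μ ≤ lam i) {w : ι → ℝ} (hw : w ≠ 0) :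
    (w ⬝ᵥ M *ᵥ w) / (w ⬝ᵥ A *ᵥ w) ≤ 1 / μ + (1 / lam i₀ - 1 / μ) * cosSqAngle A w (u i₀) := by
  have hV : 0 < w ⬝ᵥ A *ᵥ w := by simpa using hA.dotProduct_mulVec_pos hw
  have hwu : w ⬝ᵥ A *ᵥ u i₀ = lam i₀ * (w ⬝ᵥ M *ᵥ u i₀) := by
    rw [heig, dotProduct_smul, smul_eq_mul]
  have huu : u i₀ ⬝ᵥ A *ᵥ u i₀ = lam i₀ := by
    rw [heig, dotProduct_smul, smul_eq_mul, horth, if_pos rfl, mul_one]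
  have hspec := mul_dotProduct_mulVec_le_of_eigenvalue_ge horth heig hμ w
  unfold cosSqAngle
  rw [hwu, huu]
  field_simp
  linarith [hspec]

end Orthonormal

end Matrix

theorem statement_10_general {n : ℕ}
    (A M : Matrix (Fin (n+2)) (Fin (n+2)) ℝ)
    (hA : A.PosDef) (hM : M.PosDef)
    (lam : Fin (n+2) → ℝ) (u : Fin (n+2) → (Fin (n+2) → ℝ))
    (hlam_pos : 0 < lam 0) (hgap : lam 0 < lam 1) (hmono : Monotone lam)
    (heig : ∀ i, A *ᵥ u i = lam i • (M *ᵥ u i))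
    (horth : ∀ i j, u i ⬝ᵥ M *ᵥ u j = if i = j then 1 else 0)
    (ρstar : ℝ)
    (cΘ : ℝ)
    (x v : Fin (n+2) → ℝ) (hx : x ≠ 0) (hv : v ≠ 0)
    (hfx : (x ⬝ᵥ A *ᵥ x) / (x ⬝ᵥ M *ᵥ x) ≤ ρstar)
    (hangle : |v ⬝ᵥ A *ᵥ x| ≤ cΘ * Real.sqrt (v ⬝ᵥ A *ᵥ v) * Real.sqrt (x ⬝ᵥ A *ᵥ x)) :
    ((v ⬝ᵥ A *ᵥ v) / (v ⬝ᵥ M *ᵥ v))⁻¹ ≤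
      1 / lam 1 + 2 * (1 / lam 0 - 1 / lam 1) * cΘ ^ 2 + 2 * (1 / lam 0 - 1 / ρstar) := by
  have hlam₁ : 0 < lam 1 := hlam_pos.trans hgap
  have hμ : ∀ i ≠ 0, lam 1 ≤ lam i := fun i hi => hmono (Fin.one_le_of_ne_zero hi)
  have hu₀ : u 0 ≠ 0 := fun h => by simpa [h] using horth 0 0
  have hrayleigh_v := dotProduct_mulVec_div_le_of_eigenvalue_ge horth hA heig hlam_pos hlam₁ hμ hv
  have hrayleigh_x := dotProduct_mulVec_div_le_of_eigenvalue_ge horth hA heig hlam_pos hlam₁ hμ hx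
  have hcos_vx := cosSqAngle_le_sq_of_abs_le hA.posSemidef hangle
  have hcos_vu₀ := cosSqAngle_le_two_mul_cosSqAngle_add hA hv hx hu₀
  have hρ : 1 / ρstar ≤ (x ⬝ᵥ M *ᵥ x) / (x ⬝ᵥ A *ᵥ x) := by
    have hT : 0 < x ⬝ᵥ A *ᵥ x := by simpa using hA.dotProduct_mulVec_pos hx
    have hX : 0 < x ⬝ᵥ M *ᵥ x := by simpa using hM.dotProduct_mulVec_pos hx
    simpa only [one_div_div, one_mul] using one_div_le_one_div_of_le (div_pos hT hX) hfx
  have hgap' : 0 ≤ 1 / lam 0 - 1 / lam 1 :=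
    sub_nonneg.mpr (one_div_le_one_div_of_le hlam_pos hgap.le)
  rw [inv_div]
  calc (v ⬝ᵥ M *ᵥ v) / (v ⬝ᵥ A *ᵥ v)
      ≤ 1 / lam 1 + (1 / lam 0 - 1 / lam 1) * cosSqAngle A v (u 0) := hrayleigh_v
    _ ≤ 1 / lam 1 + (1 / lam 0 - 1 / lam 1) * (2 * cΘ ^ 2 + 2 * (1 - cosSqAngle A x (u 0))) := by
        gcongr; linarith
    _ ≤ _ := by linarith

/-- Bound on the reciprocal Rayleigh quotient of B-orthogonal directions. -/
theorem statement_10 {n : ℕ}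
    (A M B : Matrix (Fin (n+2)) (Fin (n+2)) ℝ)
    (hA : A.PosDef) (hM : M.PosDef) (hB : B.PosDef)
    (lam : Fin (n+2) → ℝ) (u : Fin (n+2) → (Fin (n+2) → ℝ))
    (hlam_pos : 0 < lam 0) (hgap : lam 0 < lam 1) (hmono : Monotone lam)
    (heig : ∀ i, A *ᵥ u i = lam i • (M *ᵥ u i))
    (horth : ∀ i j, u i ⬝ᵥ M *ᵥ u j = if i = j then 1 else 0)
    (ρstar : ℝ) (hρ1 : lam 0 ≤ ρstar) (hρ2 : ρstar ≤ lam 1)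
    (cΘ : ℝ) (hcΘ0 : 0 ≤ cΘ) (hcΘ1 : cΘ ≤ 1)
    (x v : Fin (n+2) → ℝ) (hx : x ≠ 0) (hv : v ≠ 0)
    (hvBx : v ⬝ᵥ B *ᵥ x = 0)
    (hfx : (x ⬝ᵥ A *ᵥ x) / (x ⬝ᵥ M *ᵥ x) ≤ ρstar)
    (hangle : |v ⬝ᵥ A *ᵥ x| ≤ cΘ * Real.sqrt (v ⬝ᵥ A *ᵥ v) * Real.sqrt (x ⬝ᵥ A *ᵥ x)) :
    ((v ⬝ᵥ A *ᵥ v) / (v ⬝ᵥ M *ᵥ v))⁻¹ ≤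
      1 / lam 1 + 2 * (1 / lam 0 - 1 / lam 1) * cΘ ^ 2 + 2 * (1 / lam 0 - 1 / ρstar) :=
  statement_10_general A M hA hM lam u hlam_pos hgap hmono heig horth ρstar cΘ x v hx hv hfx hangle
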